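/- arXiv:1202.1068 — 4 statements merged into one kernel-verified Lean document; each statement's English description precedes it below -/
import Mathlib

section
/- Let n ≥ 3 and W_n = circ(W_1, W_2, ..., W_n) where W is the sequence with W_0 = a, W_1 = b, W_k = p*W_{k-1} + q*W_{k-2}, and suppose b ≠ 0 and W_1 ≠ W_{n+1}. Then det(circ(W_1,...,W_n)) = (b^2 - W_2*W_n)*(b - W_{n+1})^{n-2} + Σ_{k=2}^{n-1} (b*W_{k+1} - W_2*W_k)*(b - W_{n+1})^{k-2}*(q*W_n - q*a)^{n-k}. -/
/-!
Let `C = circ(W_1, …, W_n)` and let `P` be the unipotent upper triangular matrix for which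
column `j ≥ 2` of `C * P` is `C_j - p C_{j-1} - q C_{j-2}`. Entry `(i, j)` of that column is the
defect of the recurrence at the cyclic index `j - i`, which vanishes except where the index wraps
around: it is `b - W_{n+1}` on the diagonal and `q a - q W_n` on the superdiagonal. So
`det C = det (C * P)` is the determinant of two full columns followed by a bidiagonal block.
Expanding along the first row leaves two determinants of one full column followed by a bidiagonal
block, and these are computed by expanding along the last row.
-/

open Matrix Finset

variable {R : Type*} [CommRing R]

-- `-y` rather than `y` above the diagonal, so that the determinant formulas below carry no signs.
def bidiagWithCol (n : ℕ) (e : ℕ → R) (x y : R) : Matrix (Fin n) (Fin n) R :=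
  of fun i j =>
    if (j : ℕ) = 0 then e i else if (i : ℕ) = j then x else if (i : ℕ) + 1 = j then -y else 0

lemma det_lowerBidiagonal (n : ℕ) (x z : R) :
    (of fun i j : Fin n => if (i : ℕ) = j then z else if (i : ℕ) = j + 1 then x else 0).det =
      z ^ n := by
  rw [det_of_isLowerTriangular]
  · simp
  · intro i j (hij : (i : ℕ) < j)
    simp [hij.ne, show (i : ℕ) ≠ j + 1 by omega]

lemma bidiagWithCol_last_apply_eq_zero {n : ℕ} (e : ℕ → R) (x y : R) {j : Fin (n + 2)}
    (h0 : j ≠ 0) (hl : j ≠ Fin.last (n + 1)) :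
    bidiagWithCol (n + 2) e x y (Fin.last (n + 1)) j = 0 := by
  have := j.isLt
  rw [← Fin.val_ne_iff, Fin.val_last] at hl
  simp only [bidiagWithCol, of_apply, Fin.val_last, Fin.val_eq_zero_iff, h0, if_false]
  split_ifs <;> first | rfl | omega

lemma submatrix_bidiagWithCol_last_zero (n : ℕ) (e : ℕ → R) (x y : R) :
    (bidiagWithCol (n + 2) e x y).submatrix (Fin.last (n + 1)).succAbove (Fin.succAbove 0) =
      of fun i j : Fin (n + 1) =>
        if (i : ℕ) = j then -y else if (i : ℕ) = j + 1 then x else 0 := by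
  ext i j
  simp only [bidiagWithCol, submatrix_apply, of_apply, Fin.succAbove_last, Fin.succAbove_zero,
    Fin.val_castSucc, Fin.val_succ, Nat.add_one_ne_zero, if_false]
  split_ifs <;> first | rfl | omega

lemma submatrix_bidiagWithCol_last_last (n : ℕ) (e : ℕ → R) (x y : R) :
    (bidiagWithCol (n + 2) e x y).submatrix (Fin.last (n + 1)).succAbove
      (Fin.last (n + 1)).succAbove = bidiagWithCol (n + 1) e x y := by
  ext i j
  simp [bidiagWithCol]

lemma det_bidiagWithCol (n : ℕ) (e : ℕ → R) (x y : R) :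
    (bidiagWithCol (n + 1) e x y).det = ∑ t ∈ range (n + 1), e t * x ^ (n - t) * y ^ t := by
  induction n with
  | zero => simp [bidiagWithCol]
  | succ n ih =>
    rw [det_succ_row _ (Fin.last _), Fintype.sum_eq_add 0 (Fin.last _) (by simp [Fin.ext_iff])
      (fun j hj => by rw [bidiagWithCol_last_apply_eq_zero e x y hj.1 hj.2, mul_zero, zero_mul]),
      submatrix_bidiagWithCol_last_zero, submatrix_bidiagWithCol_last_last, det_lowerBidiagonal, ih,
      sum_range_succ _ (n + 1), mul_sum]
    have hsign : (-1 : R) ^ (n + 1) * e (n + 1) * (-y) ^ (n + 1) = e (n + 1) * y ^ (n + 1) := by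
      rw [mul_right_comm, ← mul_pow, neg_one_mul, neg_neg, mul_comm]
    have hshift : ∀ t ∈ range (n + 1),
        x * (e t * x ^ (n - t) * y ^ t) = e t * x ^ (n + 1 - t) * y ^ t := fun t ht => by
      rw [Nat.sub_add_comm (Nat.lt_succ_iff.mp (mem_range.mp ht)), pow_succ]
      ring
    simp only [bidiagWithCol, of_apply, Fin.val_last, Fin.val_zero, add_zero, Nat.add_one_ne_zero,
      if_false, if_true, ← two_mul, pow_mul, neg_one_sq, one_pow, one_mul, hsign,
      sum_congr rfl hshift, Nat.sub_self, pow_zero, mul_one]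
    rw [add_comm]

def bidiagWithTwoCols (n : ℕ) (c d : ℕ → R) (x y : R) : Matrix (Fin n) (Fin n) R :=
  of fun i j => if (j : ℕ) = 0 then c i else if (j : ℕ) = 1 then d i
    else if (i : ℕ) = j then x else if (i : ℕ) + 1 = j then -y else 0

lemma submatrix_bidiagWithTwoCols_succ_succAbove_one (n : ℕ) (c d : ℕ → R) (x y : R) :
    (bidiagWithTwoCols (n + 2) c d x y).submatrix Fin.succ (Fin.succAbove 1) =
      bidiagWithCol (n + 1) (fun t => c (t + 1)) x y := by
  ext i j
  cases j using Fin.cases <;>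
  simp [bidiagWithTwoCols, bidiagWithCol]

lemma det_bidiagWithTwoCols (n : ℕ) (c d : ℕ → R) (x y : R) :
    (bidiagWithTwoCols (n + 2) c d x y).det =
      ∑ t ∈ range (n + 1), (c 0 * d (t + 1) - d 0 * c (t + 1)) * x ^ (n - t) * y ^ t := by
  have hrow : ∀ j : Fin (n + 2), j ≠ 0 ∧ j ≠ 1 →
      bidiagWithTwoCols (n + 2) c d x y 0 j = 0 := by
    rintro j ⟨h0, h1⟩
    have h0' : (j : ℕ) ≠ 0 := Fin.val_ne_iff.mpr h0
    have h1' : (j : ℕ) ≠ 1 := Fin.val_ne_iff.mpr h1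
    simp [bidiagWithTwoCols, h0, h1', h0'.symm, h1'.symm]
  have hminor₀ : (bidiagWithTwoCols (n + 2) c d x y).submatrix Fin.succ (Fin.succAbove 0) =
      bidiagWithCol (n + 1) (fun t => d (t + 1)) x y := by
    ext i j
    simp [bidiagWithTwoCols, bidiagWithCol]
  rw [det_succ_row_zero, Fintype.sum_eq_add 0 1 zero_ne_one
      (fun j hj => by rw [hrow j hj, mul_zero, zero_mul]),
    hminor₀, submatrix_bidiagWithTwoCols_succ_succAbove_one, det_bidiagWithCol, det_bidiagWithCol,
    mul_sum, mul_sum, ← sum_add_distrib]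
  refine sum_congr rfl fun t _ => ?_
  simp [bidiagWithTwoCols]
  ring

lemma Fin.val_sub_eq_ite {N : ℕ} (a b : Fin N) :
    ((a - b : Fin N) : ℕ) = if (b : ℕ) ≤ a then (a : ℕ) - b else N + a - b := by
  split_ifs with h
  exacts [Fin.sub_val_of_le h, Fin.coe_sub_iff_lt.mpr (not_le.mp h)]

lemma cyclic_recurrence_defect {n : ℕ} {p q : R} {W : ℕ → R}
    (hrec : ∀ k, W (k + 2) = p * W (k + 1) + q * W k) (s : Fin (n + 3)) :
    W (s + 1) - p * W ((s - 1 : Fin (n + 3)) + 1) - q * W ((s - 2 : Fin (n + 3)) + 1) =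
      if s = 0 then W 1 - W (n + 4) else if s = 1 then -(q * W (n + 3) - q * W 0) else 0 := by
  have h1 := Fin.val_sub_eq_ite s 1
  have h2 := Fin.val_sub_eq_ite s 2
  rw [Fin.val_one] at h1
  rw [Fin.val_two] at h2
  split_ifs with hs0 hs1
  · subst hs0
    simp only [Fin.val_zero, nonpos_iff_eq_zero, one_ne_zero, OfNat.ofNat_ne_zero, if_false]
      at h1 h2 ⊢
    rw [h1, h2, show n + 3 + 0 - 1 + 1 = n + 3 by omega, show n + 3 + 0 - 2 + 1 = n + 2 by omega]
    linear_combination (hrec (n + 2) : W (n + 4) = _)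
  · subst hs1
    simp only [Fin.val_one, le_refl, if_true, one_lt_two, not_le.mpr, if_false] at h1 h2 ⊢
    rw [h1, h2, show n + 3 + 1 - 2 + 1 = n + 3 by omega]
    linear_combination hrec 0
  · have hs0' : (s : ℕ) ≠ 0 := Fin.val_ne_iff.mpr hs0
    have hs1' : (s : ℕ) ≠ 1 := Fin.val_ne_iff.mpr hs1
    obtain ⟨k, hk⟩ : ∃ k, (s : ℕ) = k + 2 := ⟨s - 2, by omega⟩
    rw [h1, h2, hk, if_pos (by omega), if_pos (by omega), show k + 2 - 1 + 1 = k + 2 by omega,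
      show k + 2 - 2 + 1 = k + 1 by omega]
    linear_combination (hrec (k + 1) : W (k + 2 + 1) = _)

def recurrenceColumnOp (n : ℕ) (p q : R) : Matrix (Fin (n + 3)) (Fin (n + 3)) R :=
  1 + of fun k j : Fin (n + 3) =>
    if 2 ≤ (j : ℕ) then (Pi.single (j - 1) (-p) + Pi.single (j - 2) (-q) : Fin (n + 3) → R) k
    else 0

lemma recurrenceColumnOp_apply_of_le {n : ℕ} (p q : R) {k j : Fin (n + 3)}
    (hjk : (j : ℕ) ≤ k) :
    recurrenceColumnOp n p q k j = (1 : Matrix (Fin (n + 3)) (Fin (n + 3)) R) k j := by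
  rw [recurrenceColumnOp, Matrix.add_apply, of_apply, add_eq_left]
  split_ifs with hj
  · have h1 : ((j - 1 : Fin (n + 3)) : ℕ) = j - 1 := by
      rw [Fin.val_sub_eq_ite, Fin.val_one, if_pos (by omega)]
    have h2 : ((j - 2 : Fin (n + 3)) : ℕ) = j - 2 := by
      rw [Fin.val_sub_eq_ite, Fin.val_two, if_pos hj]
    rw [Pi.add_apply, Pi.single_eq_of_ne, Pi.single_eq_of_ne, add_zero] <;>
      rw [← Fin.val_ne_iff] <;> omega
  · rfl

lemma det_recurrenceColumnOp (n : ℕ) (p q : R) : (recurrenceColumnOp n p q).det = 1 := by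
  rw [det_of_isUpperTriangular]
  · exact prod_eq_one fun k _ => by rw [recurrenceColumnOp_apply_of_le p q le_rfl, one_apply_eq]
  · intro k j (hjk : j < k)
    rw [recurrenceColumnOp_apply_of_le p q hjk.le, one_apply_ne hjk.ne']

lemma mul_recurrenceColumnOp_apply {m : Type*} {n : ℕ} (A : Matrix m (Fin (n + 3)) R) (p q : R)
    (i : m) (j : Fin (n + 3)) :
    (A * recurrenceColumnOp n p q) i j =
      A i j + if 2 ≤ (j : ℕ) then -p * A i (j - 1) - q * A i (j - 2) else 0 := by
  rw [recurrenceColumnOp, Matrix.mul_add, Matrix.mul_one, Matrix.add_apply, mul_apply]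
  split_ifs with hj
  · simp [mul_add, sum_add_distrib, Pi.single_apply, hj]
    ring
  · simp [hj]

lemma circulant_mul_recurrenceColumnOp {n : ℕ} {p q : R} {W : ℕ → R}
    (hrec : ∀ k, W (k + 2) = p * W (k + 1) + q * W k) :
    (of fun i j : Fin (n + 3) => W ((j - i : Fin (n + 3)) + 1)) * recurrenceColumnOp n p q =
      bidiagWithTwoCols (n + 3) (fun t => if t = 0 then W 1 else W (n + 4 - t))
        (fun t => if t = 0 then W 2 else if t = 1 then W 1 else W (n + 5 - t))
        (W 1 - W (n + 4)) (q * W (n + 3) - q * W 0) := by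
  ext i j
  have hji := Fin.val_sub_eq_ite j i
  rw [mul_recurrenceColumnOp_apply]
  simp only [of_apply, bidiagWithTwoCols]
  by_cases hj : 2 ≤ (j : ℕ)
  · have e0 : j - i = 0 ↔ (i : ℕ) = j := by rw [sub_eq_zero, eq_comm, Fin.val_inj]
    have e1 : j - i = 1 ↔ (i : ℕ) + 1 = j := by
      rw [Fin.ext_iff, hji, Fin.val_one]
      split_ifs <;> omega
    have hdefect := cyclic_recurrence_defect hrec (j - i)
    simp only [e0, e1] at hdefect
    rw [if_pos hj, if_neg (by omega), if_neg (by omega), ← hdefect, sub_right_comm j 1 i,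
      sub_right_comm j 2 i]
    ring
  · rw [if_neg hj, add_zero]
    obtain hj | hj : (j : ℕ) = 0 ∨ (j : ℕ) = 1 := by omega
    all_goals
      simp only [hji, hj, if_true, if_false, one_ne_zero]
      split_ifs <;> first | rfl | omega | (congr 1; omega)

theorem stmt7_general (n : ℕ) (hn : 3 ≤ n) (a b p q : ℤ) (W : ℕ → ℤ)
    (hW0 : W 0 = a) (hW1 : W 1 = b)
    (hrec : ∀ k, W (k + 2) = p * W (k + 1) + q * W k) :
    (Matrix.of fun i j : Fin n => W ((j - i : Fin n).val + 1)).det =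
      (b ^ 2 - W 2 * W n) * (b - W (n + 1)) ^ (n - 2) +
        ∑ k ∈ Finset.Icc 2 (n - 1),
          (b * W (k + 1) - W 2 * W k) * (b - W (n + 1)) ^ (k - 2) *
            (q * W n - q * a) ^ (n - k) := by
  obtain ⟨m, rfl⟩ : ∃ m, n = m + 3 := ⟨n - 3, by omega⟩
  subst hW0 hW1
  rw [← mul_one (det _), ← det_recurrenceColumnOp m p q, ← det_mul,
    circulant_mul_recurrenceColumnOp hrec, det_bidiagWithTwoCols, sum_range_succ', add_comm]
  congr 1
  · simp only [reduceIte, zero_add, one_ne_zero, if_false, Nat.sub_zero, pow_zero, mul_one]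
    rw [show m + 4 - 1 = m + 3 from rfl, show m + 3 - 2 = m + 1 from rfl]
    ring
  · refine sum_nbij' (fun t => m + 2 - t) (fun k => m + 2 - k) ?_ ?_ ?_ ?_ fun t ht => ?_
    iterate 4 (intro x hx; simp only [mem_range, mem_Icc] at hx ⊢; omega)
    rw [mem_range] at ht
    simp only [reduceIte, Nat.add_one_ne_zero, if_false, show t + 1 + 1 ≠ 1 by omega]
    rw [show m + 5 - (t + 1 + 1) = m + 2 - t + 1 by omega,
      show m + 4 - (t + 1 + 1) = m + 2 - t by omega, show m + 1 - (t + 1) = m + 2 - t - 2 by omega,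
      show m + 3 - (m + 2 - t) = t + 1 by omega]

theorem stmt7 (n : ℕ) (hn : 3 ≤ n) (a b p q : ℤ) (W : ℕ → ℤ)
    (hW0 : W 0 = a) (hW1 : W 1 = b)
    (hrec : ∀ k, W (k + 2) = p * W (k + 1) + q * W k)
    (hb : b ≠ 0) (hne : W 1 ≠ W (n + 1)) :
    (Matrix.of fun i j : Fin n => W ((j - i : Fin n).val + 1)).det =
      (b ^ 2 - W 2 * W n) * (b - W (n + 1)) ^ (n - 2) +
        ∑ k ∈ Finset.Icc 2 (n - 1),
          (b * W (k + 1) - W 2 * W k) * (b - W (n + 1)) ^ (k - 2) *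
            (q * W n - q * a) ^ (n - k) :=
  stmt7_general n hn a b p q W hW0 hW1 hrec
end

section
/- Let F_n denote the n-th Fibonacci number (F_1 = F_2 = 1, F_{k} = F_{k-1} + F_{k-2}). For n ≥ 3, det(circ(F_1, F_2, ..., F_n)) = (1 - F_2*F_n)*(1 - F_{n+1})^{n-2} + Σ_{k=2}^{n-1} (F_{k+1} - F_2*F_k)*(1 - F_{n+1})^{k-2}*F_n^{n-k}. -/
open Matrix



variable {R : Type*} [CommRing R]

def shiftMat (R : Type*) [CommRing R] (n : ℕ) [NeZero n] : Matrix (Fin n) (Fin n) R :=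
  Matrix.of fun i j => if j = i + 1 then 1 else 0

lemma shiftMat_mul {n : ℕ} [NeZero n] (M : Matrix (Fin n) (Fin n) R) (i j : Fin n) :
    (shiftMat R n * M) i j = M (i + 1) j := by
  simp [shiftMat, Matrix.mul_apply, ite_mul]

lemma twoDiag_apply {n : ℕ} [NeZero n] (a b : R) (i j : Fin n) :
    (a • (1 : Matrix (Fin n) (Fin n) R) + b • shiftMat R n) i j
      = (if i = j then a else 0) + (if j = i + 1 then b else 0) := by
  simp [shiftMat, Matrix.one_apply, mul_ite]

lemma det_twoDiag {m : ℕ} (a b : R) :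
    (a • (1 : Matrix (Fin (m+2)) (Fin (m+2)) R) + b • shiftMat R (m+2)).det
      = a ^ (m+2) - (-1) ^ (m+2) * b ^ (m+2) := by
  set M : Matrix (Fin (m+2)) (Fin (m+2)) R := a • 1 + b • shiftMat R (m+2) with hM
  have hMe : ∀ i j, M i j = (if i = j then a else 0) + (if j = i + 1 then b else 0) :=
    twoDiag_apply a b
  have hlast : (Fin.last (m+1)) + 1 = 0 := Fin.last_add_one _
  have hln0 : (Fin.last (m+1)) ≠ 0 := by simp [Fin.ext_iff]
  have h0 : ∀ i : Fin (m+2), i ≠ 0 → i ≠ Fin.last (m+1) → M i 0 = 0 := by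
    intro i hi hil
    rw [hMe, if_neg (by simpa [eq_comm] using hi), if_neg, add_zero]
    intro h
    exact hil (add_right_cancel (hlast.trans h)).symm
  rw [Matrix.det_succ_column_zero]
  rw [← Finset.sum_subset (Finset.subset_univ ({0, Fin.last (m+1)} : Finset (Fin (m+2))))
      (fun x _ hx => by
        simp only [Finset.mem_insert, Finset.mem_singleton, not_or] at hx
        rw [h0 x hx.1 hx.2]; ring)]
  rw [Finset.sum_pair (Ne.symm hln0)]
  have e0 : M 0 0 = a := by
    rw [hMe, if_pos rfl, if_neg (by simp [Fin.ext_iff]), add_zero]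
  have elast : M (Fin.last (m+1)) 0 = b := by
    rw [hMe, if_neg hln0, if_pos hlast.symm, zero_add]
  rw [e0, elast]
  have h1 : ((M.submatrix (Fin.succAbove 0) Fin.succ).det) = a ^ (m+1) := by
    rw [Matrix.det_of_upperTriangular]
    · have hd : ∀ k : Fin (m+1), (M.submatrix (Fin.succAbove 0) Fin.succ) k k = a := by
        intro k
        rw [Matrix.submatrix_apply, Fin.succAbove_zero, hMe, if_pos rfl, if_neg, add_zero]
        rcases eq_or_ne (k.succ) (Fin.last (m+1)) with he | he
        · rw [he, Fin.last_add_one]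
          exact fun h => Fin.succ_ne_zero k (he.symm ▸ h)
        · rw [Fin.ext_iff, Fin.val_add_one, if_neg he]
          omega
      rw [Finset.prod_congr rfl (fun k _ => hd k), Finset.prod_const, Finset.card_univ,
        Fintype.card_fin]
    · intro k l hlt
      have hlk : (l : ℕ) < (k : ℕ) := hlt
      rw [Matrix.submatrix_apply, Fin.succAbove_zero, hMe, if_neg, if_neg, add_zero]
      · rcases eq_or_ne (k.succ) (Fin.last (m+1)) with he | he
        · rw [he, Fin.last_add_one]
          exact fun h => Fin.succ_ne_zero l h
        · rw [Fin.ext_iff, Fin.val_add_one, if_neg he, Fin.val_succ, Fin.val_succ]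
          omega
      · rw [Fin.ext_iff, Fin.val_succ, Fin.val_succ]
        omega
  have h2 : ((M.submatrix (Fin.succAbove (Fin.last (m+1))) Fin.succ).det) = b ^ (m+1) := by
    rw [Matrix.det_of_lowerTriangular]
    · have hd : ∀ k : Fin (m+1), (M.submatrix (Fin.succAbove (Fin.last (m+1))) Fin.succ) k k
          = b := by
        intro k
        rw [Matrix.submatrix_apply, Fin.succAbove_last, hMe, if_neg, if_pos, zero_add]
        · rw [Fin.ext_iff, Fin.val_add_one, if_neg (Fin.castSucc_lt_last k).ne, Fin.val_succ,
            Fin.coe_castSucc]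
        · rw [Fin.ext_iff, Fin.val_succ, Fin.coe_castSucc]
          omega
      rw [Finset.prod_congr rfl (fun k _ => hd k), Finset.prod_const, Finset.card_univ,
        Fintype.card_fin]
    · intro k l hlt
      have hlk : (k : ℕ) < (l : ℕ) := hlt
      rw [Matrix.submatrix_apply, Fin.succAbove_last, hMe, if_neg, if_neg, add_zero]
      · rw [Fin.ext_iff, Fin.val_add_one, if_neg (Fin.castSucc_lt_last k).ne, Fin.val_succ,
          Fin.coe_castSucc]
        omega
      · rw [Fin.ext_iff, Fin.val_succ, Fin.coe_castSucc]
        omega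
  rw [h1, h2]
  simp only [Fin.val_zero, Fin.val_last, pow_zero, one_mul]
  ring

lemma fin_sub_val {n : ℕ} [NeZero n] (d c : Fin n) :
    ((d - c : Fin n) : ℕ) = if (c:ℕ) ≤ (d:ℕ) then (d:ℕ) - c else (d:ℕ) + n - c := by
  have hd := d.isLt; have hc := c.isLt
  rw [Fin.sub_def]
  show (n - (c:ℕ) + d) % n = _
  split
  · rw [show n - (c:ℕ) + d = n + ((d:ℕ) - c) by omega, Nat.add_mod_left, Nat.mod_eq_of_lt (by omega)]
  · rw [Nat.mod_eq_of_lt (by omega)]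
    omega

-- entrywise Fibonacci recurrence identity
lemma fib_entry {m : ℕ} (d : Fin (m+3)) :
    (Nat.fib ((d:ℕ)+1) : ℤ) - Nat.fib (((d - 1 : Fin (m+3)):ℕ)+1)
        - Nat.fib (((d - 2 : Fin (m+3)):ℕ)+1)
      = (if d = 0 then (1 - (Nat.fib (m+4) : ℤ)) else 0)
        + (if d = 1 then -(Nat.fib (m+3) : ℤ) else 0) := by
  have h1 : ((1 : Fin (m+3)) : ℕ) = 1 := by
    rw [Fin.val_one']
    exact Nat.mod_eq_of_lt (by omega)
  have h2 : ((2 : Fin (m+3)) : ℕ) = 2 := by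
    rw [show (2 : Fin (m+3)) = 1 + 1 by open Fin.CommRing in norm_num, Fin.val_add, h1]
    exact Nat.mod_eq_of_lt (by omega)
  rw [fin_sub_val, fin_sub_val, h1, h2]
  rcases d with ⟨k, hk⟩
  simp only [Fin.ext_iff, Fin.val_zero, h1]
  match k with
  | 0 =>
    norm_num
    rw [show m+3-2+1 = m+2 by omega]
    have := Nat.fib_add_two (n := m+2)
    push_cast [this]
    ring
  | 1 =>
    norm_num
    rw [show 1 + (m+3) - 2 + 1 = m+3 by omega]
  | (k+2) =>
    have : ¬ (k + 2 = 0) := by omega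
    have : ¬ (k + 2 = 1) := by omega
    simp only [if_neg ‹¬ (k+2=0)›, if_neg ‹¬ (k+2=1)›, add_zero]
    rw [if_pos (by omega), if_pos (by omega)]
    rw [show k+2-1+1 = k+2 by omega, show k+2-2+1 = k+1 by omega]
    have := Nat.fib_add_two (n := k+1)
    push_cast [this]
    ring

section
variable {R : Type*} [CommRing R]

def tridMat (R : Type*) [CommRing R] (n : ℕ) [NeZero n] : Matrix (Fin n) (Fin n) R :=
  1 - shiftMat R n - shiftMat R n * shiftMat R n

lemma key_identity (m : ℕ) :
    tridMat ℤ (m+3) * (Matrix.of fun i j : Fin (m+3) => (Nat.fib ((j - i : Fin (m+3)).val + 1) : ℤ))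
      = (1 - (Nat.fib (m+4) : ℤ)) • (1 : Matrix (Fin (m+3)) (Fin (m+3)) ℤ)
        + (-(Nat.fib (m+3) : ℤ)) • shiftMat ℤ (m+3) := by
  set A : Matrix (Fin (m+3)) (Fin (m+3)) ℤ :=
    Matrix.of fun i j : Fin (m+3) => (Nat.fib ((j - i : Fin (m+3)).val + 1) : ℤ) with hA
  ext i j
  rw [twoDiag_apply]
  have := shiftMat_mul (R := ℤ) A
  rw [tridMat, sub_mul, sub_mul, one_mul, mul_assoc]
  simp only [Matrix.sub_apply, shiftMat_mul]
  have hAe : ∀ i j : Fin (m+3), A i j = (Nat.fib ((j - i : Fin (m+3)).val + 1) : ℤ) := fun _ _ => rfl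
  rw [hAe, hAe, hAe]
  have e1 : j - (i + 1) = (j - i) - 1 := by open Fin.CommRing in ring
  have e2 : j - (i + 1 + 1) = (j - i) - 2 := by open Fin.CommRing in ring
  rw [e1, e2]
  have := fib_entry (m := m) (j - i)
  rw [this]
  congr 1
  · congr 1
    simp [sub_eq_zero, eq_comm]
  · congr 1
    simp [eq_iff_iff, sub_eq_iff_eq_add, add_comm]
end

lemma det_key (m : ℕ) :
    (tridMat ℤ (m+3)).det
        * (Matrix.of fun i j : Fin (m+3) => (Nat.fib ((j - i : Fin (m+3)).val + 1) : ℤ)).det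
      = (1 - (Nat.fib (m+4) : ℤ)) ^ (m+3) - (Nat.fib (m+3) : ℤ) ^ (m+3) := by
  rw [← Matrix.det_mul, key_identity m,
    det_twoDiag (m := m+1) (1 - (Nat.fib (m+4) : ℤ)) (-(Nat.fib (m+3) : ℤ))]
  rw [show ((-1 : ℤ)) ^ (m+3) * (-(Nat.fib (m+3) : ℤ)) ^ (m+3)
      = ((-1) * (-(Nat.fib (m+3) : ℤ))) ^ (m+3) from (mul_pow _ _ _).symm]
  ring_nf

lemma cassini : ∀ k : ℕ, ((Nat.fib (k+1) : ℤ))^2 - Nat.fib (k+1) * Nat.fib k - (Nat.fib k : ℤ)^2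
    = (-1)^k := by
  intro k
  induction k with
  | zero => norm_num
  | succ k ih =>
    have := Nat.fib_add_two (n := k)
    push_cast [this]
    push_cast at ih
    linear_combination (-1 : ℤ) * ih

def luc (k : ℕ) : ℤ := 2 * Nat.fib (k+1) - Nat.fib k

lemma pow_plus : ∀ k : ℕ, (⟨1,1⟩ : ℤ√5) ^ k * 2 = ⟨2^k * luc k, 2^k * Nat.fib k⟩ := by
  intro k
  induction k with
  | zero => simp [luc]; rfl
  | succ k ih =>
    rw [pow_succ, mul_comm ((⟨1,1⟩ : ℤ√5) ^ k) _, mul_assoc, ih]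
    apply Zsqrtd.ext <;>
      simp only [Zsqrtd.re_mul, Zsqrtd.im_mul, luc] <;>
      push_cast [Nat.fib_add_two (n := k)] <;> ring

lemma pow_minus : ∀ k : ℕ, (⟨-1,1⟩ : ℤ√5) ^ k * 2
    = ⟨2^k * ((-1)^k * luc k), 2^k * ((-1)^(k+1) * Nat.fib k)⟩ := by
  intro k
  induction k with
  | zero => simp [luc]; rfl
  | succ k ih =>
    rw [pow_succ, mul_comm ((⟨-1,1⟩ : ℤ√5) ^ k) _, mul_assoc, ih]
    apply Zsqrtd.ext <;>
      simp only [Zsqrtd.re_mul, Zsqrtd.im_mul, luc] <;>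
      push_cast [Nat.fib_add_two (n := k)] <;> ring

section
variable {R : Type*} [CommRing R]

lemma det_twoDiag' {n : ℕ} [NeZero n] (hn : 2 ≤ n) (a b : R) :
    (a • (1 : Matrix (Fin n) (Fin n) R) + b • shiftMat R n).det
      = a ^ n - (-1) ^ n * b ^ n := by
  obtain ⟨m, rfl⟩ : ∃ m, n = m + 2 := ⟨n - 2, by omega⟩
  exact det_twoDiag a b

lemma twoDiag_mul_twoDiag {n : ℕ} [NeZero n] (a b c d : R) :
    (a • (1 : Matrix (Fin n) (Fin n) R) + b • shiftMat R n)
        * (c • (1 : Matrix (Fin n) (Fin n) R) + d • shiftMat R n)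
      = (a*c) • (1 : Matrix (Fin n) (Fin n) R) + (a*d + b*c) • shiftMat R n
        + (b*d) • (shiftMat R n * shiftMat R n) := by
  rw [mul_add, add_mul, add_mul, smul_mul_smul_comm, smul_mul_smul_comm, smul_mul_smul_comm,
    smul_mul_smul_comm]
  simp only [one_mul, mul_one]
  rw [add_smul]
  abel

lemma trid_map (m : ℕ) :
    (Int.castRingHom (ℤ√5)).mapMatrix (tridMat ℤ (m+3)) = tridMat (ℤ√5) (m+3) := by
  apply Matrix.ext
  intro i j
  simp only [RingHom.mapMatrix_apply, Matrix.map_apply, tridMat, Matrix.sub_apply,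
    Matrix.one_apply, shiftMat_mul]
  simp only [shiftMat, Matrix.of_apply]
  split_ifs <;> norm_num

lemma det_trid (m : ℕ) :
    (tridMat ℤ (m+3)).det = 1 + (-1)^(m+3) - luc (m+3) := by
  have c := Int.castRingHom (ℤ√5)
  have hfact : ((⟨-1,1⟩ : ℤ√5) • 1 + (-2 : ℤ√5) • shiftMat (ℤ√5) (m+3))
      * ((⟨1,1⟩ : ℤ√5) • 1 + (2 : ℤ√5) • shiftMat (ℤ√5) (m+3))
        = (4 : ℤ√5) • tridMat (ℤ√5) (m+3) := by
    rw [twoDiag_mul_twoDiag, tridMat]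
    have s1 : (⟨-1,1⟩ : ℤ√5) * ⟨1,1⟩ = 4 := by
      apply Zsqrtd.ext <;> simp [Zsqrtd.re_mul, Zsqrtd.im_mul]
    have s2 : (⟨-1,1⟩ : ℤ√5) * 2 + (-2 : ℤ√5) * ⟨1,1⟩ = -4 := by
      apply Zsqrtd.ext <;> simp [Zsqrtd.re_mul, Zsqrtd.im_mul,
        Zsqrtd.re_add, Zsqrtd.im_add, Zsqrtd.re_neg, Zsqrtd.im_neg] <;> ring
    have s3 : (-2 : ℤ√5) * 2 = -4 := by norm_num
    rw [s1, s2, s3]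
    module
  have hdets : ((⟨-1,1⟩:ℤ√5)^(m+3) - (-1)^(m+3)*(-2)^(m+3))
        * ((⟨1,1⟩:ℤ√5)^(m+3) - (-1)^(m+3)*2^(m+3))
      = 4^(m+3) * ((Int.castRingHom (ℤ√5)) ((tridMat ℤ (m+3)).det)) := by
    rw [← det_twoDiag' (by omega) (⟨-1,1⟩ : ℤ√5) (-2 : ℤ√5),
      ← det_twoDiag' (by omega) (⟨1,1⟩ : ℤ√5) (2 : ℤ√5), ← Matrix.det_mul, hfact,
      Matrix.det_smul, Fintype.card_fin, ← trid_map m, ← RingHom.map_det]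
  have h2a : ((-1 : ℤ√5))^(m+3) * (-2)^(m+3) * 2 = (Int.castRingHom (ℤ√5)) (2^(m+4)) := by
    rw [← mul_pow, map_pow, map_ofNat]
    norm_num
    ring
  have h2b : ((-1 : ℤ√5))^(m+3) * 2^(m+3) * 2
      = (Int.castRingHom (ℤ√5)) ((-1)^(m+3) * 2^(m+4)) := by
    rw [_root_.map_mul, map_pow, map_pow, map_ofNat, _root_.map_neg, _root_.map_one]
    rw [show (m+4) = (m+3)+1 from rfl, pow_succ]
    ring
  have e1 : ((⟨-1,1⟩:ℤ√5)^(m+3) - (-1)^(m+3)*(-2)^(m+3)) * 2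
      = (⟨2^(m+3)*((-1)^(m+3)*luc (m+3)) - 2^(m+4), 2^(m+3)*((-1)^(m+4)*Nat.fib (m+3))⟩ : ℤ√5) := by
    rw [sub_mul, pow_minus, h2a]
    apply Zsqrtd.ext <;>
      simp only [Zsqrtd.re_sub, Zsqrtd.im_sub, Int.coe_castRingHom, Zsqrtd.re_intCast,
        Zsqrtd.im_intCast] <;> ring
  have e2 : ((⟨1,1⟩:ℤ√5)^(m+3) - (-1)^(m+3)*2^(m+3)) * 2
      = (⟨2^(m+3)*(luc (m+3)) - (-1)^(m+3)*2^(m+4), 2^(m+3)*(Nat.fib (m+3))⟩ : ℤ√5) := by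
    rw [sub_mul, pow_plus, h2b]
    apply Zsqrtd.ext <;>
      simp only [Zsqrtd.re_sub, Zsqrtd.im_sub, Int.coe_castRingHom, Zsqrtd.re_intCast,
        Zsqrtd.im_intCast] <;> ring
  have key : (Int.castRingHom (ℤ√5)) (4^(m+3) * ((tridMat ℤ (m+3)).det * 4))
      = (Int.castRingHom (ℤ√5)) (4^(m+3) * ((1 + (-1)^(m+3) - luc (m+3)) * 4)) := by
    have lhs4 : (Int.castRingHom (ℤ√5)) (4^(m+3) * ((tridMat ℤ (m+3)).det * 4))
        = (((⟨-1,1⟩:ℤ√5)^(m+3) - (-1)^(m+3)*(-2)^(m+3)) * 2)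
          * (((⟨1,1⟩:ℤ√5)^(m+3) - (-1)^(m+3)*2^(m+3)) * 2) := by
      rw [show (((⟨-1,1⟩:ℤ√5)^(m+3) - (-1)^(m+3)*(-2)^(m+3)) * 2)
            * (((⟨1,1⟩:ℤ√5)^(m+3) - (-1)^(m+3)*2^(m+3)) * 2)
          = (((⟨-1,1⟩:ℤ√5)^(m+3) - (-1)^(m+3)*(-2)^(m+3))
            * ((⟨1,1⟩:ℤ√5)^(m+3) - (-1)^(m+3)*2^(m+3))) * 4 by ring, hdets]
      rw [_root_.map_mul, _root_.map_mul, map_pow, map_ofNat]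
      ring
    rw [lhs4, e1, e2]
    have hcass := cassini (m+3)
    have hu : ((-1:ℤ))^(m+3) * (-1)^(m+3) = 1 := by
      rw [← pow_add]
      exact Even.neg_one_pow ⟨m+3, rfl⟩
    have h4n : ((4:ℤ))^(m+3) = 2^(m+3) * 2^(m+3) := by
      rw [show (4:ℤ) = 2*2 by norm_num, mul_pow]
    apply Zsqrtd.ext <;>
      simp only [Zsqrtd.re_mul, Zsqrtd.im_mul, Int.coe_castRingHom, Zsqrtd.re_intCast,
        Zsqrtd.im_intCast, luc]
    · linear_combination
        (4*((-1:ℤ))^(m+3)*(2:ℤ)^(m+3)*(2:ℤ)^(m+3)) * hcass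
        + (2*(2:ℤ)^(m+3)*(2:ℤ)^(m+3)*(2 - (2*(Nat.fib (m+3+1):ℤ) - (Nat.fib (m+3):ℤ)))) * hu
        + (-(4*(1 + ((-1:ℤ))^(m+3) - (2*(Nat.fib (m+3+1):ℤ) - (Nat.fib (m+3):ℤ))))) * h4n
    · linear_combination (2*((Nat.fib (m+3):ℤ))*(2:ℤ)^(m+3)*(2:ℤ)^(m+3)) * hu
  have hinj : Function.Injective (Int.castRingHom (ℤ√5)) := fun x y h => by
    have : ((x : ℤ√5)).re = ((y : ℤ√5)).re := by rw [show ((x:ℤ√5)) = ((y:ℤ√5)) from h]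
    simpa [Zsqrtd.re_intCast] using this
  have := hinj key
  have h4 : ((4:ℤ)^(m+3)) ≠ 0 := by positivity
  have := mul_left_cancel₀ h4 this
  have := mul_right_cancel₀ (by norm_num : (4:ℤ) ≠ 0) this
  exact this
end

lemma tel (x y : ℤ) : ∀ m : ℕ,
    (y^2 - x*y - x^2) * (∑ j ∈ Finset.range (m+1), (Nat.fib (j+1) : ℤ) * x^j * y^(m-j))
      = y^(m+2) - (Nat.fib (m+2):ℤ)*x^(m+1)*y - (Nat.fib (m+1):ℤ)*x^(m+2) := by
  intro m
  induction m with
  | zero => simp [Nat.fib]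
  | succ m ih =>
    rw [Finset.sum_range_succ]
    have hsum : (∑ j ∈ Finset.range (m+1), (Nat.fib (j+1) : ℤ) * x^j * y^(m+1-j))
        = (∑ j ∈ Finset.range (m+1), (Nat.fib (j+1) : ℤ) * x^j * y^(m-j)) * y := by
      rw [Finset.sum_mul]
      apply Finset.sum_congr rfl
      intro j hj
      have : j ≤ m := by
        have := Finset.mem_range.mp hj; omega
      rw [show m+1-j = (m-j)+1 by omega, pow_succ]
      ring
    rw [hsum]
    have hf : (Nat.fib (m+3) : ℤ) = Nat.fib (m+2) + Nat.fib (m+1) := by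
      push_cast [Nat.fib_add_two (n := m+1)]
      ring
    simp only [Nat.sub_self, pow_zero, mul_one]
    rw [show m+1+2 = m+3 from rfl, show m+1+1 = m+2 from rfl, hf]
    linear_combination y * ih

lemma D_ne_zero (m : ℕ) : (1 + (-1:ℤ)^(m+3) - luc (m+3)) ≠ 0 := by
  have h1 : (Nat.fib (m+3) : ℤ) < (Nat.fib (m+4) : ℤ) := by
    exact_mod_cast Nat.fib_lt_fib_succ (n := m+3) (by omega)
  have h2 : (3:ℤ) ≤ (Nat.fib (m+4) : ℤ) := by
    have : 3 ≤ Nat.fib (m+4) := by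
      calc 3 = Nat.fib 4 := by norm_num [Nat.fib]
      _ ≤ Nat.fib (m+4) := Nat.fib_mono (by omega)
    exact_mod_cast this
  simp only [luc, show m+3+1 = m+4 from rfl]
  rcases Nat.even_or_odd (m+3) with he | ho
  · rw [he.neg_one_pow]; omega
  · rw [ho.neg_one_pow]; omega

theorem stmt8 (n : ℕ) (hn : 3 ≤ n) :
    (Matrix.of fun i j : Fin n =>
        (Nat.fib ((j - i : Fin n).val + 1) : ℤ)).det =
      (1 - (Nat.fib 2 : ℤ) * Nat.fib n) * (1 - (Nat.fib (n + 1) : ℤ)) ^ (n - 2) +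
        ∑ k ∈ Finset.Icc 2 (n - 1),
          ((Nat.fib (k + 1) : ℤ) - (Nat.fib 2 : ℤ) * Nat.fib k) *
            (1 - (Nat.fib (n + 1) : ℤ)) ^ (k - 2) * (Nat.fib n : ℤ) ^ (n - k) := by
  obtain ⟨m, rfl⟩ : ∃ m, n = m + 3 := ⟨n - 3, by omega⟩
  have hf2 : (Nat.fib 2 : ℤ) = 1 := by norm_num
  simp only [hf2, one_mul, show m+3+1 = m+4 from rfl, show m+3-2 = m+1 from rfl,
    show m+3-1 = m+2 from rfl]
  have hIco : (∑ k ∈ Finset.Icc 2 (m+2),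
        ((Nat.fib (k+1) : ℤ) - Nat.fib k) * (1 - (Nat.fib (m+4):ℤ))^(k-2)
          * ((Nat.fib (m+3):ℤ))^(m+3-k))
      = ∑ i ∈ Finset.range (m+1),
        ((Nat.fib (2+i+1) : ℤ) - Nat.fib (2+i)) * (1 - (Nat.fib (m+4):ℤ))^(2+i-2)
          * ((Nat.fib (m+3):ℤ))^(m+3-(2+i)) := by
    rw [← Finset.Ico_add_one_right_eq_Icc, Finset.sum_Ico_eq_sum_range]
    rw [show m+2+1-2 = m+1 by omega]
  rw [hIco]
  have hsum : (∑ i ∈ Finset.range (m+1),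
        ((Nat.fib (2+i+1) : ℤ) - Nat.fib (2+i)) * (1 - (Nat.fib (m+4):ℤ))^(2+i-2)
          * ((Nat.fib (m+3):ℤ))^(m+3-(2+i)))
      = (∑ i ∈ Finset.range (m+1),
          (Nat.fib (i+1) : ℤ) * (1 - (Nat.fib (m+4):ℤ))^i * ((Nat.fib (m+3):ℤ))^(m-i))
        * (Nat.fib (m+3):ℤ) := by
    rw [Finset.sum_mul]
    apply Finset.sum_congr rfl
    intro i hi
    have him : i ≤ m := by have := Finset.mem_range.mp hi; omega
    rw [show 2+i-2 = i by omega, show m+3-(2+i) = (m-i)+1 by omega, show 2+i+1 = i+3 by omega,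
      show 2+i = i+2 by omega, pow_succ]
    have hfib : (Nat.fib (i+3) : ℤ) = Nat.fib (i+1) + Nat.fib (i+2) := by
      have h := Nat.fib_add_two (n := i+1)
      rw [show i+1+2 = i+3 from rfl, show i+1+1 = i+2 from rfl] at h
      exact_mod_cast h
    rw [hfib]
    ring
  rw [hsum]
  apply mul_left_cancel₀ (D_ne_zero m)
  have hdk := det_key m
  rw [det_trid m] at hdk
  rw [hdk]
  have hcass := cassini (m+3)
  rw [show m+3+1 = m+4 from rfl] at hcass
  have hD : (1 + (-1:ℤ)^(m+3) - luc (m+3))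
      = -(((Nat.fib (m+3):ℤ))^2 - (1 - (Nat.fib (m+4):ℤ))*(Nat.fib (m+3):ℤ)
          - (1 - (Nat.fib (m+4):ℤ))^2) := by
    simp only [luc, show m+3+1 = m+4 from rfl]
    linear_combination (-1 : ℤ) * hcass
  rw [hD]
  have htel := tel (1 - (Nat.fib (m+4):ℤ)) ((Nat.fib (m+3):ℤ)) m
  have ha' : (Nat.fib (m+4) : ℤ) = Nat.fib (m+2) + Nat.fib (m+3) := by
    have h := Nat.fib_add_two (n := m+2)
    rw [show m+2+2 = m+4 from rfl, show m+2+1 = m+3 from rfl] at h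
    exact_mod_cast h
  have hb' : (Nat.fib (m+3) : ℤ) = Nat.fib (m+1) + Nat.fib (m+2) := by
    have h := Nat.fib_add_two (n := m+1)
    rw [show m+1+2 = m+3 from rfl, show m+1+1 = m+2 from rfl] at h
    exact_mod_cast h
  have hp2 : (Nat.fib (m+2) : ℤ) = Nat.fib (m+4) - Nat.fib (m+3) := by omega
  have hq2 : (Nat.fib (m+1) : ℤ) = 2 * Nat.fib (m+3) - Nat.fib (m+4) := by omega
  rw [hp2, hq2] at htel
  linear_combination ((Nat.fib (m+3) : ℤ)) * htel
end

section
/- Let L_n be the Lucas numbers (L_1 = 1, L_2 = 3, L_k = L_{k-1} + L_{k-2}, with L_0 = 2). For n ≥ 3, det(circ(L_1, ..., L_n)) = (1 - 3*L_n)*(1 - L_{n+1})^{n-2} + Σ_{k=2}^{n-1} (L_{k+1} - 3*L_k)*(1 - L_{n+1})^{k-2}*(L_n - 2)^{n-k}. -/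
/-!
If `W (k + 2) = p * W (k + 1) + q * W k`, subtracting `p` times column `j - 1` and `q` times
column `j - 2` from each column `j ≥ 2` of `circ(W 1, …, W n)` (a unimodular column operation)
annihilates everything outside the first two columns except the wrap-around terms: the diagonal
`W 1 - W (n + 1)` and the superdiagonal `q * (W 0 - W n)`. Expanding this almost bidiagonal matrix
along its last row gives a first-order recursion in its size, whose solution is the closed form.
The Lucas numbers are the case `p = q = 1`, `W 0 = 2`, `W 1 = 1`.
-/

open Matrix Finset

variable {R : Type*} [CommRing R]

namespace Matrix

def recurrenceColOp (n : ℕ) (p q : R) : Matrix (Fin n) (Fin n) R :=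
  of fun k j => if k = j then 1 else if 2 ≤ (j : ℕ) ∧ (k : ℕ) + 1 = j then -p
    else if 2 ≤ (j : ℕ) ∧ (k : ℕ) + 2 = j then -q else 0

theorem det_recurrenceColOp (n : ℕ) (p q : R) : (recurrenceColOp n p q).det = 1 := by
  rw [det_of_isUpperTriangular]
  · simp [recurrenceColOp]
  · intro i j hij
    have : (j : ℕ) < i := hij
    simp only [recurrenceColOp, of_apply]
    rw [if_neg (by omega), if_neg (by omega), if_neg (by omega)]

theorem mul_recurrenceColOp_apply_of_lt_two {n : ℕ} (A : Matrix (Fin n) (Fin n) R) (p q : R)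
    (i j : Fin n) (hj : (j : ℕ) < 2) : (A * recurrenceColOp n p q) i j = A i j := by
  have hcol : ∀ k, recurrenceColOp n p q k j = if k = j then 1 else 0 := fun k => by
    simp only [recurrenceColOp, of_apply]
    split_ifs <;> first | rfl | omega
  simp [mul_apply, hcol]

theorem mul_recurrenceColOp_apply_of_two_le {n : ℕ} (A : Matrix (Fin n) (Fin n) R) (p q : R)
    {i j k₁ k₂ : Fin n} (hj : 2 ≤ (j : ℕ)) (h₁ : (k₁ : ℕ) + 1 = j) (h₂ : (k₂ : ℕ) + 2 = j) :
    (A * recurrenceColOp n p q) i j = A i j - p * A i k₁ - q * A i k₂ := by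
  have hcol : ∀ k, recurrenceColOp n p q k j =
      (if k = j then 1 else 0) + (if k = k₁ then -p else 0) + (if k = k₂ then -q else 0) :=
    fun k => by
      simp only [recurrenceColOp, of_apply, Fin.ext_iff]
      split_ifs <;> first | omega | ring
  simp only [mul_apply, hcol, mul_add, mul_ite, mul_one, mul_zero, sum_add_distrib,
    sum_ite_eq', mem_univ, if_true]
  ring

def twoColumnBidiagonal (n : ℕ) (a b : ℕ → R) (d u : R) : Matrix (Fin n) (Fin n) R :=
  of fun i j => if (j : ℕ) = 0 then a i else if (j : ℕ) = 1 then b i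
    else if i = j then d else if (i : ℕ) + 1 = j then u else 0

def columnBidiagonal (n : ℕ) (c : ℕ → R) (u d : R) : Matrix (Fin n) (Fin n) R :=
  of fun i j => if (j : ℕ) = 0 then c i else if i = j then u else if (i : ℕ) = j + 1 then d else 0

theorem det_columnBidiagonal (s : ℕ) (c : ℕ → R) (u d : R) :
    (columnBidiagonal (s + 1) c u d).det = c 0 * u ^ s := by
  rw [det_of_isLowerTriangular, Fin.prod_univ_succ]
  · simp [columnBidiagonal]
  · intro i j hij
    have : (i : ℕ) < j := hij
    simp only [columnBidiagonal, of_apply]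
    rw [if_neg (by omega), if_neg (by omega), if_neg (by omega)]

section Minors

variable (s : ℕ) (a b : ℕ → R) (d u : R)

theorem twoColumnBidiagonal_submatrix_last_zero :
    (twoColumnBidiagonal (s + 3) a b d u).submatrix (Fin.last _).succAbove
      (0 : Fin (s + 3)).succAbove = columnBidiagonal (s + 2) b u d := by
  ext i j
  simp only [twoColumnBidiagonal, columnBidiagonal, submatrix_apply, of_apply,
    Fin.succAbove_last, Fin.succAbove_zero, Fin.val_succ, Fin.val_castSucc, Fin.ext_iff]
  split_ifs <;> first | rfl | contradiction | omega

theorem twoColumnBidiagonal_submatrix_last_one :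
    (twoColumnBidiagonal (s + 3) a b d u).submatrix (Fin.last _).succAbove
      (1 : Fin (s + 3)).succAbove = columnBidiagonal (s + 2) a u d := by
  ext i j
  cases j using Fin.cases
  · simp [twoColumnBidiagonal, columnBidiagonal]
  · simp only [twoColumnBidiagonal, columnBidiagonal, submatrix_apply, of_apply,
      Fin.succAbove_last, Fin.one_succAbove_succ, Fin.val_succ, Fin.val_castSucc, Fin.ext_iff]
    split_ifs <;> first | rfl | contradiction | omega

theorem twoColumnBidiagonal_submatrix_last_last :
    (twoColumnBidiagonal (s + 3) a b d u).submatrix (Fin.last _).succAbove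
      (Fin.last _).succAbove = twoColumnBidiagonal (s + 2) a b d u := by
  ext i j
  simp [twoColumnBidiagonal]

end Minors

theorem det_twoColumnBidiagonal_succ (s : ℕ) (a b : ℕ → R) (d u : R) :
    (twoColumnBidiagonal (s + 3) a b d u).det =
      d * (twoColumnBidiagonal (s + 2) a b d u).det +
        (-u) ^ (s + 1) * (a 0 * b (s + 2) - b 0 * a (s + 2)) := by
  set H := twoColumnBidiagonal (s + 3) a b d u
  rw [det_succ_row H (Fin.last _), Fin.sum_univ_succ, Fin.sum_univ_succ, Fin.sum_univ_castSucc,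
    sum_eq_zero]
  · have hlast₀ : H (Fin.last _) 0 = a (s + 2) := by simp [H, twoColumnBidiagonal]
    have hlast₁ : H (Fin.last _) 1 = b (s + 2) := by simp [H, twoColumnBidiagonal]
    have hlast : H (Fin.last _) (Fin.last _) = d := by simp [H, twoColumnBidiagonal]
    simp only [Fin.succ_zero_eq_one, Fin.succ_last]
    rw [twoColumnBidiagonal_submatrix_last_zero, twoColumnBidiagonal_submatrix_last_one,
      twoColumnBidiagonal_submatrix_last_last, det_columnBidiagonal, det_columnBidiagonal,
      hlast₀, hlast₁, hlast]
    simp only [Fin.val_last, Fin.val_zero, Fin.val_one, Nat.succ_eq_add_one]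
    rw [show s + 2 + (s + 1 + 1) = 2 * (s + 2) by omega, pow_mul, neg_one_sq, one_pow, neg_pow]
    ring
  · intro k _
    have : H (Fin.last _) k.castSucc.succ.succ = 0 := by
      simp only [H, twoColumnBidiagonal, of_apply, Fin.val_last, Fin.val_succ, Fin.val_castSucc,
        Fin.ext_iff]
      rw [if_neg (by omega), if_neg (by omega), if_neg (by omega), if_neg (by omega)]
    rw [this, mul_zero, zero_mul]

theorem det_twoColumnBidiagonal (s : ℕ) (a b : ℕ → R) (d u : R) :
    (twoColumnBidiagonal (s + 2) a b d u).det =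
      ∑ k ∈ range (s + 1),
        d ^ k * (-u) ^ (s - k) * (a 0 * b (s + 1 - k) - b 0 * a (s + 1 - k)) := by
  induction s with
  | zero => simp [det_fin_two, twoColumnBidiagonal]
  | succ s ih =>
    rw [det_twoColumnBidiagonal_succ, ih, sum_range_succ' _ (s + 1), mul_sum]
    simp only [Nat.add_sub_add_right, pow_succ]
    congr 1
    · exact sum_congr rfl fun k _ => by ring
    · simp only [pow_zero, Nat.sub_zero, one_mul]
      ring

end Matrix

theorem Fin.val_sub_cases {n : ℕ} (a b : Fin n) :
    (b : ℕ) ≤ a ∧ ((a - b : Fin n) : ℕ) = a - b ∨ (a : ℕ) < b ∧ ((a - b : Fin n) : ℕ) = n + a - b :=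
  (le_or_gt b a).imp (fun h => ⟨h, Fin.coe_sub_iff_le.2 h⟩) (fun h => ⟨h, Fin.coe_sub_iff_lt.2 h⟩)

theorem circulant_recurrence_defect {n : ℕ} (W : ℕ → R) (p q : R)
    (hW : ∀ k, W (k + 2) = p * W (k + 1) + q * W k) {i j k₁ k₂ : Fin n} (hj : 2 ≤ (j : ℕ))
    (h₁ : (k₁ : ℕ) + 1 = j) (h₂ : (k₂ : ℕ) + 2 = j) :
    W ((j - i : Fin n) + 1) - p * W ((k₁ - i : Fin n) + 1) - q * W ((k₂ - i : Fin n) + 1) =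
      if i = j then W 1 - W (n + 1) else if (i : ℕ) + 1 = j then q * (W 0 - W n) else 0 := by
  -- the recurrence with free indices, so that `omega` can supply the index equations
  have hW' : ∀ x y z, y = x + 1 → z = y + 1 → W z = p * W y + q * W x := by
    rintro x _ _ rfl rfl
    exact hW x
  have := Fin.val_sub_cases j i
  have := Fin.val_sub_cases k₁ i
  have := Fin.val_sub_cases k₂ i
  have := j.isLt
  split_ifs with hij hij'
  · subst hij
    rw [show ((i - i : Fin n) : ℕ) + 1 = 1 by omega]
    linear_combination
      hW' ((k₂ - i : Fin n) + 1) ((k₁ - i : Fin n) + 1) (n + 1) (by omega) (by omega)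
  · rw [show ((j - i : Fin n) : ℕ) + 1 = 2 by omega, show ((k₁ - i : Fin n) : ℕ) + 1 = 1 by omega,
      show ((k₂ - i : Fin n) : ℕ) + 1 = n by omega]
    linear_combination hW 0
  · linear_combination hW' ((k₂ - i : Fin n) + 1) ((k₁ - i : Fin n) + 1) ((j - i : Fin n) + 1)
      (by omega) (by omega)

theorem circulant_mul_recurrenceColOp {n : ℕ} (W : ℕ → R) (p q : R)
    (hW : ∀ k, W (k + 2) = p * W (k + 1) + q * W k) :
    (of fun i j : Fin n => W ((j - i : Fin n) + 1)) * recurrenceColOp n p q =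
      twoColumnBidiagonal n (fun t => W ((n - t) % n + 1)) (fun t => W ((n - t + 1) % n + 1))
        (W 1 - W (n + 1)) (q * (W 0 - W n)) := by
  ext i j
  by_cases hj : 2 ≤ (j : ℕ)
  · rw [mul_recurrenceColOp_apply_of_two_le _ _ _ hj (k₁ := ⟨j - 1, by omega⟩)
      (k₂ := ⟨j - 2, by omega⟩) (by simp only; omega) (by simp only; omega)]
    simp only [of_apply]
    rw [circulant_recurrence_defect W p q hW hj (by simp only; omega) (by simp only; omega)]
    have hj₀ : (j : ℕ) ≠ 0 := by omega
    have hj₁ : (j : ℕ) ≠ 1 := by omega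
    simp only [twoColumnBidiagonal, of_apply, hj₀, hj₁, if_false]
  · rw [mul_recurrenceColOp_apply_of_lt_two _ _ _ _ _ (by omega)]
    rcases (by omega : (j : ℕ) = 0 ∨ (j : ℕ) = 1) with h | h <;>
      simp [twoColumnBidiagonal, Fin.val_sub, h]

theorem det_circulant_of_linear_recurrence (n : ℕ) (hn : 2 ≤ n) (W : ℕ → R) (p q : R)
    (hW : ∀ k, W (k + 2) = p * W (k + 1) + q * W k) :
    (of fun i j : Fin n => W ((j - i : Fin n) + 1)).det =
      (W 1 ^ 2 - W 2 * W n) * (W 1 - W (n + 1)) ^ (n - 2) +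
        ∑ k ∈ Icc 2 (n - 1),
          (W 1 * W (k + 1) - W 2 * W k) * (W 1 - W (n + 1)) ^ (k - 2) *
            (q * (W n - W 0)) ^ (n - k) := by
  obtain ⟨s, rfl⟩ : ∃ s, n = s + 2 := ⟨n - 2, by omega⟩
  have ha₀ : (s + 2 - 0) % (s + 2) + 1 = 1 := by simp
  have hb₀ : (s + 2 - 0 + 1) % (s + 2) + 1 = 2 := by simp [Nat.add_mod_left]
  have ha : ∀ k ≤ s, (s + 2 - (s + 1 - k)) % (s + 2) + 1 = k + 2 := fun k hk => by
    rw [Nat.mod_eq_of_lt (by omega)]; omega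
  have hb : ∀ k < s, (s + 2 - (s + 1 - k) + 1) % (s + 2) + 1 = k + 3 := fun k hk => by
    rw [Nat.mod_eq_of_lt (by omega)]; omega
  have hb_top : (s + 2 - (s + 1 - s) + 1) % (s + 2) + 1 = 1 := by
    rw [show s + 2 - (s + 1 - s) + 1 = s + 2 by omega, Nat.mod_self]
  rw [← mul_one (det _), ← det_recurrenceColOp (s + 2) p q, ← det_mul,
    circulant_mul_recurrenceColOp W p q hW, det_twoColumnBidiagonal, sum_range_succ, add_comm,
    Icc_sub_one_right_eq_Ico_of_not_isMin (by simp), sum_Ico_eq_sum_range, Nat.add_sub_cancel]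
  congr 1
  · rw [ha₀, hb₀, ha s le_rfl, hb_top, Nat.sub_self, pow_zero, mul_one]
    ring
  · refine sum_congr rfl fun k hk => ?_
    rw [mem_range] at hk
    rw [ha₀, hb₀, ha k hk.le, hb k hk, add_comm 2 k, Nat.add_sub_cancel,
      show s + 2 - (k + 2) = s - k by omega]
    ring

theorem stmt12 (n : ℕ) (hn : 3 ≤ n) (L : ℕ → ℤ)
    (hL0 : L 0 = 2) (hL1 : L 1 = 1)
    (hrec : ∀ k, L (k + 2) = L (k + 1) + L k) :
    (Matrix.of fun i j : Fin n => L ((j - i : Fin n).val + 1)).det =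
      (1 - 3 * L n) * (1 - L (n + 1)) ^ (n - 2) +
        ∑ k ∈ Finset.Icc 2 (n - 1),
          (L (k + 1) - 3 * L k) * (1 - L (n + 1)) ^ (k - 2) * (L n - 2) ^ (n - k) := by
  have hL2 : L 2 = 3 := by linear_combination hrec 0 + hL1 + hL0
  rw [det_circulant_of_linear_recurrence n (by omega) L 1 1 fun k => by rw [hrec, one_mul, one_mul]]
  simp only [hL0, hL1, hL2, one_pow, one_mul]
end

section
/- Let n ≥ 3 and let W satisfy W_0 = a, W_1 = b ≠ 0, W_k = p*W_{k-1} + q*W_{k-2}, with W_1 ≠ W_{n+1} over ℚ. Then det(circ(W_1,...,W_n)) = b*(b - W_{n+1})^{n-2}*g_n, where g_n = W_1 - W_2*W_n/W_1 + Σ_{k=2}^{n-1}(W_{k+1} - W_2*W_k/W_1)*(q*(W_n - W_0)/(W_1 - W_{n+1}))^{n-k}. -/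
/-!
Write the circulant as `A s t = f (t - s)`, where `f : ℤ → R` is the `n`-periodic extension of
`W 1, …, W n`. Because of the recurrence, replacing row `s` by
`row s - p • row (s+1) - q • row (s+2)` turns each of the first `n - 2` rows into
`x • e s + y • e (s+1)`, with `x = W 1 - W (n+1)` and `y = q (W 0 - W n)`; replacing row `n - 2`
by `row (n-2) - c • row (n-1)`, where `W 2 = c W 1`, kills its last entry. Multiplying on the
right by the unitriangular matrix with entries `r ^ (t - l)` (`l ≤ t ≤ n - 2`), where
`x r + y = 0`, then clears the superdiagonal entries `y`. What is left is lower triangular with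
diagonal `x, …, x, g_n, W 1`.
-/

open Matrix Finset

namespace CirculantRecurrence

variable {α R : Type*} [CommRing R] {n : ℕ}

/-- Indexing by natural numbers keeps all index arithmetic in `ℕ`. -/
def natMatrix (n : ℕ) (F : ℕ → ℕ → α) : Matrix (Fin n) (Fin n) α := of fun i j => F i j

theorem natMatrix_mul (F G : ℕ → ℕ → R) :
    natMatrix n F * natMatrix n G = natMatrix n fun i j => ∑ l ∈ range n, F i l * G l j := by
  ext i j
  exact Fin.sum_univ_eq_sum_range (fun l => F i l * G l j) n

theorem det_natMatrix_of_upper {F : ℕ → ℕ → R}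
    (h : ∀ i j, j < i → i < n → F i j = 0) :
    (natMatrix n F).det = ∏ i ∈ range n, F i i := by
  rw [det_of_isUpperTriangular (M := natMatrix n F) fun i j hij => h i j hij i.isLt]
  exact Fin.prod_univ_eq_prod_range (fun i => F i i) n

theorem det_natMatrix_of_lower {F : ℕ → ℕ → R}
    (h : ∀ i j, i < j → j < n → F i j = 0) :
    (natMatrix n F).det = ∏ i ∈ range n, F i i := by
  rw [det_of_isLowerTriangular (natMatrix n F) fun i j hij => h i j hij j.isLt]
  exact Fin.prod_univ_eq_prod_range (fun i => F i i) n

def rowElim (n : ℕ) (p q c : R) (s k : ℕ) : R :=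
  (if k = s then 1 else 0) - (if k = s + 1 then (if s + 2 < n then p else c) else 0) -
    (if k = s + 2 then q else 0)

def geomCols (n : ℕ) (r : R) (l t : ℕ) : R :=
  if t + 1 < n then (if l ≤ t then r ^ (t - l) else 0) else if l = t then 1 else 0

theorem det_rowElim (p q c : R) : (natMatrix n (rowElim n p q c)).det = 1 := by
  rw [det_natMatrix_of_upper fun i j hji _ => by
    simp [rowElim, hji.ne, show j ≠ i + 1 by omega, show j ≠ i + 2 by omega]]
  exact prod_eq_one fun i _ => by simp [rowElim]

theorem det_geomCols (r : R) : (natMatrix n (geomCols n r)).det = 1 := by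
  rw [det_natMatrix_of_upper fun i j hji _ => by
    simp [geomCols, hji.ne', not_le.mpr hji]]
  exact prod_eq_one fun i _ => by simp [geomCols]

theorem sum_rowElim_mul (p q c : R) (F : ℕ → R) {s : ℕ} (hs : s < n) :
    ∑ k ∈ range n, rowElim n p q c s k * F k =
      F s - (if s + 1 < n then (if s + 2 < n then p else c) * F (s + 1) else 0) -
        (if s + 2 < n then q * F (s + 2) else 0) := by
  simp [rowElim, sub_mul, ite_mul, sum_sub_distrib, hs]

theorem sum_mul_geomCols (r : R) (v : ℕ → R) {t : ℕ} (ht : t < n) :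
    ∑ l ∈ range n, v l * geomCols n r l t =
      if t + 1 < n then ∑ l ∈ range (t + 1), v l * r ^ (t - l) else v t := by
  unfold geomCols
  split_ifs with h
  · simp only [mul_ite, mul_zero]
    rw [← sum_filter]
    congr 1
    ext l
    simp only [mem_filter, mem_range]
    omega
  · simp [ht]

def circEntry (n : ℕ) (W : ℕ → α) (m : ℤ) : α := W ((m % n).toNat + 1)

theorem circEntry_add_self (W : ℕ → α) (m : ℤ) :
    circEntry n W (m + n) = circEntry n W m := by
  simp [circEntry]

theorem circEntry_zero (W : ℕ → α) : circEntry n W 0 = W 1 := by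
  simp [circEntry]

theorem circEntry_natCast (W : ℕ → α) {k : ℕ} (hk : k < n) :
    circEntry n W k = W (k + 1) := by
  rw [circEntry, ← Int.natCast_mod, Int.toNat_natCast, Nat.mod_eq_of_lt hk]

theorem circEntry_of_add_self_eq (W : ℕ → α) {m : ℤ} {k : ℕ} (hk : k < n)
    (h : m + n = k) : circEntry n W m = W (k + 1) := by
  rw [← circEntry_add_self, h, circEntry_natCast W hk]

theorem circulant_eq_natMatrix (W : ℕ → α) :
    (of fun i j : Fin n => W ((j - i : Fin n).val + 1)) =
      natMatrix n fun s t => circEntry n W (t - s) := by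
  ext i j
  have h : ((j : ℤ) - i) % n = (j - i : Fin n).val := by
    have := j.isLt
    rw [Fin.intCast_val_sub_eq_sub_add_ite]
    split_ifs with hij
    · rw [Nat.cast_zero, add_zero]
      exact Int.emod_eq_of_lt (by omega) (by omega)
    · rw [Int.emod_eq_add_self_emod]
      have := i.isLt
      exact Int.emod_eq_of_lt (by omega) (by omega)
  simp [natMatrix, circEntry, h]

theorem circEntry_recurrence {p q : R} {W : ℕ → R}
    (hrec : ∀ k, W (k + 2) = p * W (k + 1) + q * W k) (hn : 2 ≤ n) {m : ℤ} (h0 : 0 ≤ m)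
    (hm : m < n) :
    circEntry n W m - p * circEntry n W (m - 1) - q * circEntry n W (m - 2) =
      if m = 0 then W 1 - W (n + 1) else if m = 1 then q * (W 0 - W n) else 0 := by
  obtain ⟨k, rfl⟩ := Int.eq_ofNat_of_zero_le h0
  obtain ⟨N, rfl⟩ : ∃ N, n = N + 2 := ⟨n - 2, by omega⟩
  have hk : k < N + 2 := by exact_mod_cast hm
  match k with
  | 0 =>
    have e1 : circEntry (N + 2) W ((0 : ℕ) - 1) = W (N + 2) :=
      circEntry_of_add_self_eq W (k := N + 1) (by omega) (by push_cast; ring)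
    have e2 : circEntry (N + 2) W ((0 : ℕ) - 2) = W (N + 1) :=
      circEntry_of_add_self_eq W (k := N) (by omega) (by push_cast; ring)
    rw [circEntry_natCast W hk, e1, e2, hrec (N + 1)]
    simp only [zero_add, Nat.cast_zero, if_pos]
    ring
  | 1 =>
    have e1 : circEntry (N + 2) W ((1 : ℕ) - 1) = W 1 := by
      rw [Nat.cast_one, sub_self, circEntry_zero]
    have e2 : circEntry (N + 2) W ((1 : ℕ) - 2) = W (N + 2) :=
      circEntry_of_add_self_eq W (k := N + 1) (by omega) (by push_cast; ring)
    rw [circEntry_natCast W hk, e1, e2, hrec 0]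
    simp only [zero_add, Nat.cast_one, one_ne_zero, if_false, if_true]
    ring
  | k + 2 =>
    rw [show ((k + 2 : ℕ) : ℤ) - 1 = ((k + 1 : ℕ) : ℤ) by push_cast; ring,
      show ((k + 2 : ℕ) : ℤ) - 2 = ((k : ℕ) : ℤ) by push_cast; ring,
      circEntry_natCast W hk, circEntry_natCast W (by omega), circEntry_natCast W (by omega),
      hrec (k + 1), if_neg (by omega), if_neg (by omega)]
    ring

theorem sum_rowElim_mul_circEntry {p q : R} {W : ℕ → R}
    (hrec : ∀ k, W (k + 2) = p * W (k + 1) + q * W k) (c : R) {s t : ℕ} (hs : s + 2 < n)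
    (ht : t < n) :
    ∑ k ∈ range n, rowElim n p q c s k * circEntry n W (t - k) =
      (if t = s then W 1 - W (n + 1) else 0) + (if t = s + 1 then q * (W 0 - W n) else 0) := by
  rw [sum_rowElim_mul _ _ _ _ (by omega), if_pos (by omega), if_pos hs, if_pos hs]
  push_cast
  simp only [sub_add_eq_sub_sub]
  rcases le_or_gt s t with hst | hts
  · rw [circEntry_recurrence hrec (by omega) (by omega) (by omega)]
    by_cases h0 : t = s
    · simp [h0]
    · by_cases h1 : t = s + 1
      · simp [h1]
      · rw [if_neg (by omega), if_neg (by omega), if_neg h0, if_neg h1, add_zero]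
  · have key := circEntry_recurrence hrec (n := n) (m := t - s + n) (by omega) (by omega)
      (by omega)
    rw [show (t : ℤ) - s + n - 1 = t - s - 1 + n by ring,
      show (t : ℤ) - s + n - 2 = t - s - 2 + n by ring,
      circEntry_add_self, circEntry_add_self, circEntry_add_self, if_neg (by omega),
      if_neg (by omega)] at key
    rw [key, if_neg (by omega), if_neg (by omega), add_zero]

def triangularized (n : ℕ) (p q c r : R) (W : ℕ → R) (s t : ℕ) : R :=
  ∑ l ∈ range n,
    (∑ k ∈ range n, rowElim n p q c s k * circEntry n W (l - k)) * geomCols n r l t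

section Triangularized

variable {p q c r : R} {W : ℕ → R}

theorem triangularized_of_lt (hrec : ∀ k, W (k + 2) = p * W (k + 1) + q * W k)
    (hc : W 2 = c * W 1) (hr : (W 1 - W (n + 1)) * r + q * (W 0 - W n) = 0)
    {s t : ℕ} (hst : s < t) (ht : t < n) : triangularized n p q c r W s t = 0 := by
  rw [triangularized, sum_mul_geomCols r _ ht]
  by_cases hs : s + 2 < n
  · split_ifs with htn
    · rw [sum_congr rfl fun l hl => by
        rw [sum_rowElim_mul_circEntry hrec c hs (by rw [mem_range] at hl; omega)]]
      simp only [add_mul, ite_mul, zero_mul, sum_add_distrib, sum_ite_eq', mem_range,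
        if_pos (by omega : s < t + 1), if_pos (by omega : s + 1 < t + 1)]
      rw [show t - s = t - (s + 1) + 1 by omega, pow_succ]
      linear_combination r ^ (t - (s + 1)) * hr
    · rw [sum_rowElim_mul_circEntry hrec c hs ht, if_neg (by omega), if_neg (by omega),
        add_zero]
  · rw [if_neg (by omega), sum_rowElim_mul _ _ _ _ (by omega), if_pos (by omega), if_neg hs,
      if_neg hs, show t = s + 1 by omega]
    push_cast
    rw [show ((s : ℤ) + 1 - s) = ((1 : ℕ) : ℤ) by push_cast; ring, sub_self, circEntry_zero,
      circEntry_natCast W (by omega), hc]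
    ring

theorem triangularized_self_of_add_two_lt (hrec : ∀ k, W (k + 2) = p * W (k + 1) + q * W k)
    {s : ℕ} (hs : s + 2 < n) : triangularized n p q c r W s s = W 1 - W (n + 1) := by
  rw [triangularized, sum_mul_geomCols r _ (by omega), if_pos (by omega),
    sum_congr rfl fun l hl => by
      rw [sum_rowElim_mul_circEntry hrec c hs (by rw [mem_range] at hl; omega)]]
  simp [add_mul, ite_mul, sum_add_distrib]

theorem triangularized_self_of_add_two_eq {s : ℕ} (hs : s + 2 = n) :
    triangularized n p q c r W s s =
      W 1 - c * W n + ∑ k ∈ Icc 2 (n - 1), (W (k + 1) - c * W k) * r ^ (n - k) := by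
  subst hs
  rw [triangularized, sum_mul_geomCols r _ (by omega), if_pos (by omega),
    sum_congr rfl fun l hl => by
      rw [sum_rowElim_mul _ _ _ _ (by rw [mem_range] at hl; omega), if_pos (by omega),
        if_neg (by omega), if_neg (by omega), sub_zero]]
  rw [sum_range_succ, add_comm, show s + 2 - 1 = s + 1 by omega, ← Ico_add_one_right_eq_Icc,
    sum_Ico_eq_sum_range, show s + 1 + 1 - 2 = s by omega]
  congr 1
  · rw [sub_self, circEntry_zero,
      circEntry_of_add_self_eq W (k := s + 1) (by omega) (by push_cast; ring)]
    simp
  · refine sum_congr rfl fun l hl => ?_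
    rw [mem_range] at hl
    rw [circEntry_of_add_self_eq W (k := l + 2) (by omega) (by push_cast; ring),
      circEntry_of_add_self_eq W (k := l + 1) (by omega) (by push_cast; ring),
      show s + 2 - (2 + l) = s - l by omega, show 2 + l = l + 2 by ring]

theorem triangularized_self_of_add_one_eq {s : ℕ} (hs : s + 1 = n) :
    triangularized n p q c r W s s = W 1 := by
  rw [triangularized, sum_mul_geomCols r _ (by omega), if_neg (by omega),
    sum_rowElim_mul _ _ _ _ (by omega), if_neg (by omega), if_neg (by omega), sub_zero, sub_zero,
    sub_self, circEntry_zero]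

end Triangularized

theorem det_circulant_of_recurrence {p q c r : R} {W : ℕ → R}
    (hrec : ∀ k, W (k + 2) = p * W (k + 1) + q * W k) (hn : 2 ≤ n) (hc : W 2 = c * W 1)
    (hr : (W 1 - W (n + 1)) * r + q * (W 0 - W n) = 0) :
    (of fun i j : Fin n => W ((j - i : Fin n).val + 1)).det =
      W 1 * (W 1 - W (n + 1)) ^ (n - 2) *
        (W 1 - c * W n + ∑ k ∈ Icc 2 (n - 1), (W (k + 1) - c * W k) * r ^ (n - k)) := by
  obtain ⟨N, rfl⟩ : ∃ N, n = N + 2 := ⟨n - 2, by omega⟩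
  calc (of fun i j : Fin (N + 2) => W ((j - i : Fin (N + 2)).val + 1)).det
      = (natMatrix (N + 2) (rowElim (N + 2) p q c) *
          natMatrix (N + 2) (fun s t => circEntry (N + 2) W (t - s)) *
          natMatrix (N + 2) (geomCols (N + 2) r)).det := by
        rw [det_mul, det_mul, det_rowElim, det_geomCols, one_mul, mul_one,
          circulant_eq_natMatrix]
    _ = ∏ s ∈ range (N + 2), triangularized (N + 2) p q c r W s s := by
        rw [natMatrix_mul, natMatrix_mul]
        exact det_natMatrix_of_lower (F := triangularized (N + 2) p q c r W)
          fun s t hst ht => triangularized_of_lt hrec hc hr hst ht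
    _ = _ := by
        rw [prod_range_succ, prod_range_succ,
          prod_congr rfl fun s hs => triangularized_self_of_add_two_lt hrec (by simp at hs; omega),
          prod_const, card_range, triangularized_self_of_add_two_eq rfl,
          triangularized_self_of_add_one_eq rfl, Nat.add_sub_cancel]
        ring

end CirculantRecurrence

theorem stmt17_general (n : ℕ) (hn : 3 ≤ n) (b p q : ℚ) (W : ℕ → ℚ)
    (hW1 : W 1 = b)
    (hrec : ∀ k, W (k + 2) = p * W (k + 1) + q * W k)
    (hb : b ≠ 0) (hne : W 1 ≠ W (n + 1)) :
    (Matrix.of fun i j : Fin n => W ((j - i : Fin n).val + 1)).det =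
      b * (b - W (n + 1)) ^ (n - 2) *
        (W 1 - W 2 * W n / W 1 +
          ∑ k ∈ Finset.Icc 2 (n - 1),
            (W (k + 1) - W 2 * W k / W 1) *
              (q * (W n - W 0) / (W 1 - W (n + 1))) ^ (n - k)) := by
  subst hW1
  have hx : W 1 - W (n + 1) ≠ 0 := sub_ne_zero.mpr hne
  rw [CirculantRecurrence.det_circulant_of_recurrence (c := W 2 / W 1)
    (r := q * (W n - W 0) / (W 1 - W (n + 1))) hrec (by omega) (div_mul_cancel₀ _ hb).symm
    (by rw [mul_div_cancel₀ _ hx]; ring)]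
  simp only [mul_div_right_comm (W 2)]

theorem stmt17 (n : ℕ) (hn : 3 ≤ n) (a b p q : ℚ) (W : ℕ → ℚ)
    (hW0 : W 0 = a) (hW1 : W 1 = b)
    (hrec : ∀ k, W (k + 2) = p * W (k + 1) + q * W k)
    (hb : b ≠ 0) (hne : W 1 ≠ W (n + 1)) :
    (Matrix.of fun i j : Fin n => W ((j - i : Fin n).val + 1)).det =
      b * (b - W (n + 1)) ^ (n - 2) *
        (W 1 - W 2 * W n / W 1 +
          ∑ k ∈ Finset.Icc 2 (n - 1),
            (W (k + 1) - W 2 * W k / W 1) *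
              (q * (W n - W 0) / (W 1 - W (n + 1))) ^ (n - k)) :=
  stmt17_general n hn b p q W hW1 hrec hb hne
end
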